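/- Let {w^k} be generated as follows, let w* ∈ A_s with P_{A_s}(w* − λ∇f(w*)) = {w*}, and let U be an open neighborhood of w* on which f is twice continuously differentiable such that for every J ∈ I_{w*} the restricted Hessian map w ↦ ∇²f_J(w_J) is Lipschitz continuous on U ∩ A_J and ∇²f_J(w*_J) is positive definite, where f_J(u) := f(ι_J u) is the restriction of f to the coordinates in J (ι_J denotes zero-padding embedding). Suppose there is N ∈ ℕ such that for all k ≥ N the iterates satisfy P_{A_s}(w^k) ⊆ U and are generated for some fixed t ≥ 1 by: choose w^{k,0} ∈ P_{A_s}(w^k) and J ∈ J_s with w^{k,0} ∈ A_J; for j = 0,…,t−1 set w^{k,j+1}_i = 0 for i ∉ J and w^{k,j+1}_J = w^{k,j}_J − (∇²f_J(w^{k,j}_J))^{-1} ∇f_J(w^{k,j}_J); then w^{k+1} ∈ P_{A_s}(w^{k,t} − λ∇f(w^{k,t})). If w^k → w*, then the convergence is Q-quadratic: there exist c > 0 and N′ ∈ ℕ such that ‖w^{k+1} − w*‖ ≤ c·‖w^k − w*‖² for all k ≥ N′. -/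

import Mathlib

open Filter Topology

noncomputable section

def spSet (n s : ℕ) : Set (EuclideanSpace ℝ (Fin n)) :=
  {w | (Finset.univ.filter fun i => w i ≠ 0).card ≤ s}

def projSet {n : ℕ} (A : Set (EuclideanSpace ℝ (Fin n))) (z : EuclideanSpace ℝ (Fin n)) :
    Set (EuclideanSpace ℝ (Fin n)) :=
  {y | y ∈ A ∧ ∀ x ∈ A, ‖z - y‖ ≤ ‖z - x‖}

def coordSub {n : ℕ} (J : Finset (Fin n)) : Set (EuclideanSpace ℝ (Fin n)) :=
  {w | ∀ i ∉ J, w i = 0}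

def coordRestrict {n : ℕ} (J : Finset (Fin n)) (v : EuclideanSpace ℝ (Fin n)) :
    EuclideanSpace ℝ (Fin n) :=
  (EuclideanSpace.equiv (Fin n) ℝ).symm (fun i => if i ∈ J then v i else 0)
/-- The restriction of an $n × n$ matrix to the rows and columns indexed by $J$
(representing the Hessian $∇²f_J$ of the restricted function $f_J$). -/
def hessSub {n : ℕ} (H : Matrix (Fin n) (Fin n) ℝ) (J : Finset (Fin n)) :
    Matrix {i // i ∈ J} {i // i ∈ J} ℝ :=
  fun i j => H i.1 j.1

/-- One Newton step of the restricted function $f_J$, performed in the coordinates of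
$J$ (all other coordinates are set to zero):
$x_J ← x_J - (∇²f_J(x_J))^{-1} ∇f_J(x_J)$, using $∇f_J(x_J) = (∇f(x))_J$ and
$∇²f_J(x_J)$ the corresponding submatrix of the Hessian of $f$ at $x$. -/
noncomputable def newtonStep {n : ℕ}
    (f' : EuclideanSpace ℝ (Fin n) → EuclideanSpace ℝ (Fin n))
    (Hess : EuclideanSpace ℝ (Fin n) → Matrix (Fin n) (Fin n) ℝ)
    (J : Finset (Fin n)) (x : EuclideanSpace ℝ (Fin n)) : EuclideanSpace ℝ (Fin n) :=
  (EuclideanSpace.equiv (Fin n) ℝ).symm fun i =>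
    if h : i ∈ J then
      x i - ∑ j : {i // i ∈ J}, (hessSub (Hess x) J)⁻¹ ⟨i, h⟩ j * f' x j.1
    else 0

/-!
Put `z⋆ = w⋆ - λ ∇f(w⋆)`. Since `w⋆` is the only nearest `s`-sparse point of `z⋆`, every
coordinate of `z⋆` on the support of `w⋆` is strictly larger in modulus than every coordinate off
it. This gap survives near `z⋆`, so the nearest `s`-sparse points `y` of a nearby `z` keep that
support and satisfy `‖y - w⋆‖ ≤ ‖z - z⋆‖`; with the Lipschitz gradient, the projected gradient
step is therefore Lipschitz at `w⋆`.

The same fixed-point property gives `(∇f(w⋆))_J = 0` for every admissible `J ⊇ supp w⋆`. On `A_J`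
the Newton step of `f_J` then converges quadratically: its error is the inverse Hessian block,
bounded near `w⋆` by continuity, applied to the Taylor remainder of the gradient, which is
quadratic because the Hessian block is Lipschitz. Finitely many `J` give a uniform constant `C`.

Near `w⋆` the support of the projection of `w^k` contains that of `w⋆`, so the chosen `J` is
admissible, the `t` Newton steps give `‖w^{k,t} - w⋆‖ ≤ 4C‖w^k - w⋆‖²`, and the final projected
gradient step costs a factor `1 + λL`.
-/

local notation "E" n:max => EuclideanSpace ℝ (Fin n)

variable {n s : ℕ}

lemma coordRestrict_apply (J : Finset (Fin n)) (v : E n) (i : Fin n) :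
    coordRestrict J v i = if i ∈ J then v i else 0 := by
  simp [coordRestrict]

lemma norm_coordRestrict_le (J : Finset (Fin n)) (v : E n) : ‖coordRestrict J v‖ ≤ ‖v‖ := by
  refine sq_le_sq₀ (norm_nonneg _) (norm_nonneg _) |>.1 ?_
  simp only [EuclideanSpace.norm_sq_eq, coordRestrict_apply]
  gcongr with i
  split_ifs <;> simp

lemma norm_le_sqrt_mul_of_forall_abs_le {x : E n} {b : ℝ} (hb : 0 ≤ b) (h : ∀ i, |x i| ≤ b) :
    ‖x‖ ≤ √n * b := by
  rw [← Real.sqrt_sq hb, ← Real.sqrt_mul n.cast_nonneg, ← Real.sqrt_sq (norm_nonneg x)]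
  refine Real.sqrt_le_sqrt ?_
  calc ‖x‖ ^ 2 = ∑ i, |x i| ^ 2 := by simp [EuclideanSpace.norm_sq_eq]
    _ ≤ ∑ _i : Fin n, b ^ 2 := by gcongr with i; exact h i
    _ = n * b ^ 2 := by simp

def coordSupport (y : E n) : Finset (Fin n) := Finset.univ.filter fun i => y i ≠ 0

lemma mem_coordSupport {y : E n} {i : Fin n} : i ∈ coordSupport y ↔ y i ≠ 0 := by
  simp [coordSupport]

lemma mem_spSet {y : E n} : y ∈ spSet n s ↔ (coordSupport y).card ≤ s := Iff.rfl

def updateCoord (y : E n) (i : Fin n) (a : ℝ) : E n :=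
  (EuclideanSpace.equiv (Fin n) ℝ).symm (Function.update (EuclideanSpace.equiv (Fin n) ℝ y) i a)

lemma updateCoord_apply (y : E n) (i : Fin n) (a : ℝ) (j : Fin n) :
    updateCoord y i a j = if j = i then a else y j := by
  simp [updateCoord, Function.update]

lemma norm_sub_updateCoord_sq (z y : E n) (i : Fin n) (a : ℝ) :
    ‖z - updateCoord y i a‖ ^ 2 = ‖z - y‖ ^ 2 - (z i - y i) ^ 2 + (z i - a) ^ 2 := by
  simp only [EuclideanSpace.norm_sq_eq, PiLp.sub_apply, Real.norm_eq_abs, sq_abs,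
    updateCoord_apply, apply_ite (z _ - ·), ite_pow]
  rw [← Finset.add_sum_erase _ _ (Finset.mem_univ i),
    ← Finset.add_sum_erase _ (fun j => (z j - y j) ^ 2) (Finset.mem_univ i), if_pos rfl,
    Finset.sum_congr rfl fun j hj => if_neg (Finset.ne_of_mem_erase hj)]
  ring

lemma coordSupport_updateCoord_subset (y : E n) (i : Fin n) (a : ℝ) :
    coordSupport (updateCoord y i a) ⊆ insert i (coordSupport y) := by
  intro j hj
  rw [mem_coordSupport, updateCoord_apply] at hj
  split_ifs at hj with h
  · simp [h]
  · exact Finset.mem_insert_of_mem (mem_coordSupport.2 hj)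

lemma coordSupport_updateCoord_zero_subset (y : E n) (i : Fin n) :
    coordSupport (updateCoord y i 0) ⊆ (coordSupport y).erase i := by
  intro j hj
  rw [mem_coordSupport, updateCoord_apply] at hj
  split_ifs at hj with h
  · exact absurd rfl hj
  · exact Finset.mem_erase.2 ⟨h, mem_coordSupport.2 hj⟩

lemma eventually_coordSupport_subset (w : E n) :
    ∀ᶠ x in 𝓝 w, coordSupport w ⊆ coordSupport x :=
  (Filter.eventually_all_finset _).2 fun i hi =>
    ((PiLp.continuous_apply 2 _ i).continuousAt.eventually_ne (mem_coordSupport.1 hi)).mono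
      fun _ hx => mem_coordSupport.2 hx

lemma mem_coordSub_of_coordSupport_subset {w x : E n} {J : Finset (Fin n)}
    (hwx : coordSupport w ⊆ coordSupport x) (hx : x ∈ coordSub J) : w ∈ coordSub J :=
  fun i hi => by_contra fun hw => mem_coordSupport.1 (hwx (mem_coordSupport.2 hw)) (hx i hi)

lemma apply_eq_zero_of_notMem_coordSupport {y : E n} {i : Fin n} (hi : i ∉ coordSupport y) :
    y i = 0 := by
  simpa [mem_coordSupport] using hi

section Projection

variable {y z w : E n} {i j : Fin n}

lemma apply_eq_of_mem_projSet (hy : y ∈ projSet (spSet n s) z)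
    (hi : (insert i (coordSupport y)).card ≤ s) : y i = z i := by
  have hmem : updateCoord y i (z i) ∈ spSet n s :=
    (Finset.card_le_card (coordSupport_updateCoord_subset y i (z i))).trans hi
  have h := pow_le_pow_left₀ (norm_nonneg _) (hy.2 _ hmem) 2
  rw [norm_sub_updateCoord_sq, sub_self] at h
  nlinarith [sq_nonneg (z i - y i)]

lemma apply_eq_of_mem_coordSupport (hy : y ∈ projSet (spSet n s) z) (hi : i ∈ coordSupport y) :
    y i = z i :=
  apply_eq_of_mem_projSet hy (by rw [Finset.insert_eq_of_mem hi]; exact hy.1)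

lemma eq_of_mem_projSet_of_card_lt (hy : y ∈ projSet (spSet n s) z)
    (hcard : (coordSupport y).card < s) : y = z := by
  ext i
  exact apply_eq_of_mem_projSet hy ((Finset.card_insert_le _ _).trans hcard)

lemma swap_mem_spSet (hy : y ∈ spSet n s) (hi : i ∈ coordSupport y) (j : Fin n) (a : ℝ) :
    updateCoord (updateCoord y i 0) j a ∈ spSet n s :=
  calc (coordSupport (updateCoord (updateCoord y i 0) j a)).card
      ≤ (insert j ((coordSupport y).erase i)).card :=
        Finset.card_le_card ((coordSupport_updateCoord_subset _ j a).trans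
          (Finset.insert_subset_insert _ (coordSupport_updateCoord_zero_subset y i)))
    _ ≤ ((coordSupport y).erase i).card + 1 := Finset.card_insert_le _ _
    _ = (coordSupport y).card := Finset.card_erase_add_one hi
    _ ≤ s := hy

lemma norm_sub_swap_sq (hij : i ≠ j) (hyi : y i = z i) (hyj : y j = 0) :
    ‖z - updateCoord (updateCoord y i 0) j (z j)‖ ^ 2 = ‖z - y‖ ^ 2 + z i ^ 2 - z j ^ 2 := by
  rw [norm_sub_updateCoord_sq, norm_sub_updateCoord_sq, updateCoord_apply, if_neg hij.symm,
    hyi, hyj]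
  ring

lemma abs_le_abs_of_mem_projSet (hy : y ∈ projSet (spSet n s) z) (hi : i ∈ coordSupport y)
    (hj : j ∉ coordSupport y) : |z j| ≤ |z i| := by
  have hij : i ≠ j := by rintro rfl; exact hj hi
  have h := pow_le_pow_left₀ (norm_nonneg _) (hy.2 _ (swap_mem_spSet hy.1 hi j (z j))) 2
  rw [norm_sub_swap_sq hij (apply_eq_of_mem_coordSupport hy hi)
    (apply_eq_zero_of_notMem_coordSupport hj)] at h
  exact sq_le_sq.1 (by linarith)

lemma abs_lt_abs_of_projSet_eq_singleton (h : projSet (spSet n s) z = {w})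
    (hi : i ∈ coordSupport w) (hj : j ∉ coordSupport w) : |z j| < |z i| := by
  have hw : w ∈ projSet (spSet n s) z := by simp [h]
  have hij : i ≠ j := by rintro rfl; exact hj hi
  by_contra! hle
  set x := updateCoord (updateCoord w i 0) j (z j)
  have hx : x ∈ projSet (spSet n s) z := by
    refine ⟨swap_mem_spSet hw.1 hi j (z j), fun u hu => le_trans ?_ (hw.2 u hu)⟩
    refine (sq_le_sq₀ (norm_nonneg _) (norm_nonneg _)).1 ?_
    rw [norm_sub_swap_sq hij (apply_eq_of_mem_coordSupport hw hi)
      (apply_eq_zero_of_notMem_coordSupport hj)]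
    linarith [sq_le_sq.2 hle]
  rw [h, Set.mem_singleton_iff] at hx
  apply mem_coordSupport.1 hi
  rw [← hx, updateCoord_apply, if_neg hij, updateCoord_apply, if_pos rfl]

lemma coordSupport_subset_of_mem_projSet (hy : y ∈ projSet (spSet n s) z) (hw : w ∈ spSet n s)
    (hz : ∀ i ∈ coordSupport w, z i ≠ 0 ∧ ∀ j ∉ coordSupport w, |z j| < |z i|) :
    coordSupport w ⊆ coordSupport y := by
  intro i hi
  by_contra hiy
  rcases lt_or_ge (coordSupport y).card s with hlt | hge
  · rw [eq_of_mem_projSet_of_card_lt hy hlt] at hiy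
    exact hiy (mem_coordSupport.2 (hz i hi).1)
  · obtain ⟨j, hjy, hjw⟩ : ∃ j ∈ coordSupport y, j ∉ coordSupport w := by
      by_contra! hsub
      have := Finset.card_lt_card (Finset.ssubset_iff_subset_ne.2
        ⟨hsub, fun heq => hiy (heq ▸ hi)⟩)
      exact absurd (mem_spSet.1 hw) (by omega)
    exact (abs_le_abs_of_mem_projSet hy hjy hiy).not_gt ((hz i hi).2 j hjw)

end Projection

theorem eventually_norm_sub_le_of_projSet_eq_singleton {z₀ w : E n}
    (h : projSet (spSet n s) z₀ = {w}) :
    ∀ᶠ z in 𝓝 z₀, ∀ y ∈ projSet (spSet n s) z, ‖y - w‖ ≤ ‖z - z₀‖ := by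
  have hw : w ∈ projSet (spSet n s) z₀ := by simp [h]
  set S := coordSupport w
  have hcont := PiLp.continuous_apply 2 fun _ : Fin n => ℝ
  have hgap : ∀ᶠ z in 𝓝 z₀, ∀ i ∈ S, z i ≠ 0 ∧ ∀ j ∉ S, |z j| < |z i| := by
    refine (Filter.eventually_all_finset S).2 fun i hi => ?_
    refine ((hcont i).continuousAt.eventually_ne ?_).and
      (eventually_all.2 fun j => eventually_imp_distrib_left.2 fun hj => ?_)
    · rw [← apply_eq_of_mem_coordSupport hw hi]
      exact mem_coordSupport.1 hi
    · exact (hcont j).abs.continuousAt.eventually_lt (hcont i).abs.continuousAt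
        (abs_lt_abs_of_projSet_eq_singleton h hi hj)
  filter_upwards [hgap] with z hz y hy
  have hST := coordSupport_subset_of_mem_projSet hy hw.1 hz
  have hoff : ∀ j ∈ coordSupport y, j ∉ S → z₀ j = 0 := by
    intro j hjy hjS
    have hlt : S.card < s := (Finset.card_lt_card
      ((Finset.ssubset_iff_of_subset hST).2 ⟨j, hjy, hjS⟩)).trans_le hy.1
    rw [← eq_of_mem_projSet_of_card_lt hw hlt]
    exact apply_eq_zero_of_notMem_coordSupport hjS
  have hyw : y - w = coordRestrict (coordSupport y) (z - z₀) := by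
    ext i
    rw [coordRestrict_apply, PiLp.sub_apply]
    split_ifs with hiy
    · rw [apply_eq_of_mem_coordSupport hy hiy, PiLp.sub_apply]
      by_cases hiS : i ∈ S
      · rw [apply_eq_of_mem_coordSupport hw hiS]
      · rw [apply_eq_zero_of_notMem_coordSupport hiS, hoff i hiy hiS]
    · rw [apply_eq_zero_of_notMem_coordSupport hiy,
        apply_eq_zero_of_notMem_coordSupport fun hiS => hiy (hST hiS), sub_zero]
  rw [hyw]
  exact norm_coordRestrict_le _ _

lemma apply_eq_zero_of_mem_projSet_sub_smul {w g : E n} {lam : ℝ} (hlam : lam ≠ 0)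
    (hw : w ∈ projSet (spSet n s) (w - lam • g)) {J : Finset (Fin n)} (hJ : J.card = s)
    (hwJ : w ∈ coordSub J) {i : Fin n} (hi : i ∈ J) : g i = 0 := by
  have hsub : insert i (coordSupport w) ⊆ J := Finset.insert_subset hi fun j hj =>
    by_contra fun hjJ => mem_coordSupport.1 hj (hwJ j hjJ)
  have h := apply_eq_of_mem_projSet hw ((Finset.card_le_card hsub).trans hJ.le)
  simp only [PiLp.sub_apply, PiLp.smul_apply, smul_eq_mul] at h
  exact (mul_eq_zero.1 (by linarith)).resolve_left hlam

section Newton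

open Matrix

variable {f' : E n → E n} {Hess : E n → Matrix (Fin n) (Fin n) ℝ} {U : Set (E n)}
  {J : Finset (Fin n)} {a x : E n} {K : ℝ}

lemma newtonStep_apply_of_mem {i : Fin n} (hi : i ∈ J) :
    newtonStep f' Hess J x i = x i - ((hessSub (Hess x) J)⁻¹ *ᵥ fun q : J => f' x q) ⟨i, hi⟩ := by
  simp [newtonStep, hi, Matrix.mulVec, dotProduct]

lemma newtonStep_mem_coordSub : newtonStep f' Hess J x ∈ coordSub J := fun i hi => by
  simp [newtonStep, hi]

lemma hessSub_mulVec_apply (H : Matrix (Fin n) (Fin n) ℝ) (v : E n) (q : J) :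
    (hessSub H J *ᵥ fun p : J => v p) q = ∑ p ∈ J, H q p * v p :=
  Finset.sum_coe_sort J fun p => H q p * v p

lemma newtonStep_sub_apply (hdet : IsUnit (hessSub (Hess x) J).det)
    (hgrad : ∀ i ∈ J, f' a i = 0) {i : Fin n} (hi : i ∈ J) :
    newtonStep f' Hess J x i - a i = -((hessSub (Hess x) J)⁻¹ *ᵥ
      fun q : J => f' x q - f' a q - ∑ p ∈ J, Hess x q p * (x p - a p)) ⟨i, hi⟩ := by
  set H := hessSub (Hess x) J
  have hres : (fun q : J => f' x q - f' a q - ∑ p ∈ J, Hess x q p * (x p - a p)) =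
      (fun q : J => f' x q) - H *ᵥ fun p : J => (x - a) p := by
    ext q
    rw [Pi.sub_apply, hessSub_mulVec_apply, hgrad q q.2]
    simp
  rw [newtonStep_apply_of_mem hi, hres, Matrix.mulVec_sub, Matrix.mulVec_mulVec,
    Matrix.nonsing_inv_mul H hdet, Matrix.one_mulVec]
  simp only [Pi.sub_apply, PiLp.sub_apply, H]
  ring

lemma hasDerivAt_apply_add_smul {g : E n → E n} {H : Matrix (Fin n) (Fin n) ℝ} {a d : E n}
    {θ : ℝ} (hg : HasFDerivAt g
      (LinearMap.toContinuousLinearMap (Matrix.toEuclideanLin H)) (a + θ • d)) (j : Fin n) :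
    HasDerivAt (fun θ : ℝ => g (a + θ • d) j) (∑ q, H j q * d q) θ := by
  have hline : HasDerivAt (fun θ : ℝ => a + θ • d) d θ := by
    simpa only [id, one_smul] using ((hasDerivAt_id θ).smul_const d).const_add a
  refine ((EuclideanSpace.proj (𝕜 := ℝ) j).hasFDerivAt.comp_hasDerivAt θ
    (hg.comp_hasDerivAt θ hline)).congr_deriv ?_
  simp [Matrix.mulVec, dotProduct]

lemma abs_apply_sub_sub_sum_le
    (hHess : ∀ u ∈ U, HasFDerivAt f'
      (LinearMap.toContinuousLinearMap (Matrix.toEuclideanLin (Hess u))) u)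
    (hK : ∀ u ∈ U ∩ coordSub J, ∀ v ∈ U ∩ coordSub J,
      ∀ i ∈ J, ∀ j ∈ J, |Hess u i j - Hess v i j| ≤ K * ‖u - v‖) (hK0 : 0 ≤ K)
    (hseg : segment ℝ a x ⊆ U) (ha : a ∈ coordSub J) (hx : x ∈ coordSub J)
    {j : Fin n} (hj : j ∈ J) :
    |f' x j - f' a j - ∑ q ∈ J, Hess x j q * (x q - a q)| ≤ J.card * K * ‖x - a‖ ^ 2 := by
  set d := x - a
  have hu : ∀ θ ∈ Set.Icc (0 : ℝ) 1, a + θ • d ∈ U ∩ coordSub J := fun θ hθ =>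
    ⟨hseg (segment_eq_image' ℝ a x ▸ ⟨θ, hθ, rfl⟩), fun i hi => by simp [d, ha i hi, hx i hi]⟩
  have hux : ∀ θ ∈ Set.Icc (0 : ℝ) 1, ‖a + θ • d - x‖ ≤ ‖d‖ := fun θ hθ => by
    have : a + θ • d - x = (θ - 1) • d := by simp only [d]; module
    rw [this, norm_smul, Real.norm_eq_abs, abs_of_nonpos (by linarith [hθ.2])]
    nlinarith [hθ.1, norm_nonneg d]
  have hsumJ : ∀ H : Matrix (Fin n) (Fin n) ℝ, ∑ q, H j q * d q = ∑ q ∈ J, H j q * d q :=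
    fun H => (Finset.sum_subset (Finset.subset_univ J) fun q _ hq => by
      simp [d, ha q hq, hx q hq]).symm
  set c := ∑ q ∈ J, Hess x j q * d q
  have hderiv : ∀ θ ∈ Set.Icc (0 : ℝ) 1, HasDerivWithinAt (fun θ => f' (a + θ • d) j - θ * c)
      (∑ q ∈ J, (Hess (a + θ • d) j q - Hess x j q) * d q) (Set.Icc 0 1) θ := fun θ hθ =>
    (((hasDerivAt_apply_add_smul (hHess _ (hu θ hθ).1) j).sub (hasDerivAt_mul_const c)).congr_deriv
      (by simp [hsumJ, c, sub_mul])).hasDerivWithinAt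
  have hbound : ∀ θ ∈ Set.Icc (0 : ℝ) 1,
      ‖∑ q ∈ J, (Hess (a + θ • d) j q - Hess x j q) * d q‖ ≤ J.card * K * ‖d‖ ^ 2 := by
    intro θ hθ
    refine (norm_sum_le _ _).trans ?_
    calc ∑ q ∈ J, ‖(Hess (a + θ • d) j q - Hess x j q) * d q‖ ≤ ∑ _q ∈ J, K * ‖d‖ * ‖d‖ := by
          gcongr with q hq
          rw [norm_mul, Real.norm_eq_abs]
          gcongr
          · exact (hK _ (hu θ hθ) x ⟨hseg (right_mem_segment ℝ a x), hx⟩ j hj q hq).trans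
              (mul_le_mul_of_nonneg_left (hux θ hθ) hK0)
          · exact PiLp.norm_apply_le d q
      _ = J.card * K * ‖d‖ ^ 2 := by simp; ring
  have h := Convex.norm_image_sub_le_of_norm_hasDerivWithin_le hderiv hbound (convex_Icc 0 1)
    (Set.left_mem_Icc.2 zero_le_one) (Set.right_mem_Icc.2 zero_le_one)
  simp only [d, zero_smul, add_zero, one_smul, add_sub_cancel, sub_zero, one_mul, zero_mul,
    norm_one, mul_one, Real.norm_eq_abs] at h
  have hc : ∑ q ∈ J, Hess x j q * (x q - a q) = c := by simp [c, d]
  rw [hc]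
  convert h using 2
  ring

lemma continuousWithinAt_hessSub (hU : IsOpen U) (ha : a ∈ U) (haJ : a ∈ coordSub J)
    (hK : ∀ u ∈ U ∩ coordSub J, ∀ v ∈ U ∩ coordSub J,
      ∀ i ∈ J, ∀ j ∈ J, |Hess u i j - Hess v i j| ≤ K * ‖u - v‖) :
    ContinuousWithinAt (fun x => hessSub (Hess x) J) (coordSub J) a := by
  refine continuousWithinAt_pi.2 fun p => continuousWithinAt_pi.2 fun q => ?_
  have hle : ∀ᶠ x in 𝓝[coordSub J] a, ‖Hess x p q - Hess a p q‖ ≤ K * ‖x - a‖ :=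
    eventually_nhdsWithin_iff.2 <| Filter.eventually_of_mem (hU.mem_nhds ha) fun x hxU hxJ =>
      (Real.norm_eq_abs _).trans_le (hK x ⟨hxU, hxJ⟩ a ⟨ha, haJ⟩ p p.2 q q.2)
  have hlim : Tendsto (fun x => K * ‖x - a‖) (𝓝[coordSub J] a) (𝓝 0) := by
    simpa using ((tendsto_norm_sub_self a).const_mul K).mono_left nhdsWithin_le_nhds
  exact tendsto_iff_norm_sub_tendsto_zero.2
    (squeeze_zero' (Eventually.of_forall fun _ => norm_nonneg _) hle hlim)

section LinftyOpNorm

attribute [local instance] Matrix.linftyOpNormedAddCommGroup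

lemma eventually_isUnit_det_hessSub (hU : IsOpen U) (ha : a ∈ U) (haJ : a ∈ coordSub J)
    (hK : ∀ u ∈ U ∩ coordSub J, ∀ v ∈ U ∩ coordSub J,
      ∀ i ∈ J, ∀ j ∈ J, |Hess u i j - Hess v i j| ≤ K * ‖u - v‖)
    (hPD : (hessSub (Hess a) J).PosDef) :
    ∀ᶠ x in 𝓝[coordSub J] a, IsUnit (hessSub (Hess x) J).det ∧
      ‖(hessSub (Hess x) J)⁻¹‖ < ‖(hessSub (Hess a) J)⁻¹‖ + 1 := by
  have hcont := continuousWithinAt_hessSub hU ha haJ hK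
  have hdet : (hessSub (Hess a) J).det ≠ 0 := hPD.det_pos.ne'
  have hinv : ContinuousWithinAt (fun x => (hessSub (Hess x) J)⁻¹) (coordSub J) a := by
    refine (continuousAt_matrix_inv _ ?_).comp_continuousWithinAt hcont
    simpa [Ring.inverse_eq_inv'] using continuousAt_inv₀ hdet
  have hdet_cont := continuous_id.matrix_det.continuousAt.comp_continuousWithinAt hcont
  filter_upwards [hdet_cont.eventually_ne hdet,
    hinv.norm.eventually_lt continuousWithinAt_const (lt_add_one _)] with x hx hx'
  exact ⟨isUnit_iff_ne_zero.2 hx, hx'⟩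

theorem exists_eventually_norm_newtonStep_sub_le (hU : IsOpen U) (ha : a ∈ U)
    (hHess : ∀ u ∈ U, HasFDerivAt f'
      (LinearMap.toContinuousLinearMap (Matrix.toEuclideanLin (Hess u))) u)
    (haJ : a ∈ coordSub J)
    (hK : ∀ u ∈ U ∩ coordSub J, ∀ v ∈ U ∩ coordSub J,
      ∀ i ∈ J, ∀ j ∈ J, |Hess u i j - Hess v i j| ≤ K * ‖u - v‖) (hK0 : 0 ≤ K)
    (hPD : (hessSub (Hess a) J).PosDef) (hgrad : ∀ i ∈ J, f' a i = 0) :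
    ∃ C, 0 ≤ C ∧ ∀ᶠ x in 𝓝[coordSub J] a,
      ‖newtonStep f' Hess J x - a‖ ≤ C * ‖x - a‖ ^ 2 := by
  set B := ‖(hessSub (Hess a) J)⁻¹‖ + 1
  obtain ⟨r, hr, hrU⟩ := Metric.isOpen_iff.1 hU a ha
  refine ⟨√n * (B * (J.card * K)), by positivity, ?_⟩
  filter_upwards [eventually_isUnit_det_hessSub hU ha haJ hK hPD,
    nhdsWithin_le_nhds (Metric.ball_mem_nhds a hr), self_mem_nhdsWithin]
    with x ⟨hdet, hB⟩ hxr hxJ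
  have hseg : segment ℝ a x ⊆ U :=
    ((convex_ball a r).segment_subset (Metric.mem_ball_self hr) hxr).trans hrU
  have hres : ‖fun q : J => f' x q - f' a q - ∑ p ∈ J, Hess x q p * (x p - a p)‖ ≤
      J.card * K * ‖x - a‖ ^ 2 :=
    (pi_norm_le_iff_of_nonneg (by positivity)).2 fun q => (Real.norm_eq_abs _).trans_le
      (abs_apply_sub_sub_sum_le hHess hK hK0 hseg haJ hxJ q.2)
  refine (norm_le_sqrt_mul_of_forall_abs_le (b := B * (J.card * K * ‖x - a‖ ^ 2))
    (by positivity) fun i => ?_).trans_eq (by ring)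
  by_cases hi : i ∈ J
  · rw [PiLp.sub_apply, newtonStep_sub_apply hdet hgrad hi, abs_neg, ← Real.norm_eq_abs]
    exact (norm_le_pi_norm _ _).trans <| (Matrix.linfty_opNorm_mulVec _ _).trans <|
      mul_le_mul hB.le hres (norm_nonneg _) (by positivity)
  · rw [PiLp.sub_apply, newtonStep_mem_coordSub i hi, haJ i hi, sub_zero, abs_zero]
    positivity

end LinftyOpNorm

theorem exists_norm_newtonStep_sub_le_uniform (hU : IsOpen U) (ha : a ∈ U)
    (hHess : ∀ u ∈ U, HasFDerivAt f'
      (LinearMap.toContinuousLinearMap (Matrix.toEuclideanLin (Hess u))) u)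
    (hHessLip : ∀ J : Finset (Fin n), J.card = s → a ∈ coordSub J →
      ∃ K : ℝ, ∀ u ∈ U ∩ coordSub J, ∀ v ∈ U ∩ coordSub J,
        ∀ i ∈ J, ∀ j ∈ J, |Hess u i j - Hess v i j| ≤ K * ‖u - v‖)
    (hPD : ∀ J : Finset (Fin n), J.card = s → a ∈ coordSub J → (hessSub (Hess a) J).PosDef)
    (hgrad : ∀ J : Finset (Fin n), J.card = s → a ∈ coordSub J → ∀ i ∈ J, f' a i = 0) :
    ∃ C > 0, ∃ r > 0, ∀ J : Finset (Fin n), J.card = s → a ∈ coordSub J →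
      ∀ x ∈ coordSub J, ‖x - a‖ < r → ‖newtonStep f' Hess J x - a‖ ≤ C * ‖x - a‖ ^ 2 := by
  have hJ : ∀ J : Finset (Fin n), ∃ C, 0 ≤ C ∧ (J.card = s → a ∈ coordSub J →
      ∀ᶠ x in 𝓝 a, x ∈ coordSub J → ‖newtonStep f' Hess J x - a‖ ≤ C * ‖x - a‖ ^ 2) := by
    intro J
    by_cases hJ : J.card = s ∧ a ∈ coordSub J
    · obtain ⟨K, hK⟩ := hHessLip J hJ.1 hJ.2
      have hK' : ∀ u ∈ U ∩ coordSub J, ∀ v ∈ U ∩ coordSub J,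
          ∀ i ∈ J, ∀ j ∈ J, |Hess u i j - Hess v i j| ≤ |K| * ‖u - v‖ :=
        fun u hu v hv i hi j hj => (hK u hu v hv i hi j hj).trans
          (mul_le_mul_of_nonneg_right (le_abs_self K) (norm_nonneg _))
      obtain ⟨C, hC, hev⟩ := exists_eventually_norm_newtonStep_sub_le hU ha hHess hJ.2 hK'
        (abs_nonneg K) (hPD J hJ.1 hJ.2) (hgrad J hJ.1 hJ.2)
      exact ⟨C, hC, fun _ _ => eventually_nhdsWithin_iff.1 hev⟩
    · exact ⟨0, le_rfl, fun h1 h2 => absurd ⟨h1, h2⟩ hJ⟩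
  choose C hC0 hC using hJ
  have hCle : ∀ J, C J ≤ 1 + ∑ J', C J' := fun J =>
    (Finset.single_le_sum (fun J' _ => hC0 J') (Finset.mem_univ J)).trans
      (le_add_of_nonneg_left zero_le_one)
  have hev : ∀ᶠ x in 𝓝 a, ∀ J : Finset (Fin n), J.card = s → a ∈ coordSub J → x ∈ coordSub J →
      ‖newtonStep f' Hess J x - a‖ ≤ (1 + ∑ J', C J') * ‖x - a‖ ^ 2 :=
    eventually_all.2 fun J => eventually_imp_distrib_left.2 fun h1 =>
      eventually_imp_distrib_left.2 fun h2 => (hC J h1 h2).mono fun x hx hxJ =>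
        (hx hxJ).trans (mul_le_mul_of_nonneg_right (hCle J) (sq_nonneg _))
  obtain ⟨r, hr, h⟩ := Metric.eventually_nhds_iff.1 hev
  exact ⟨1 + ∑ J, C J, add_pos_of_pos_of_nonneg one_pos (Finset.sum_nonneg fun J _ => hC0 J),
    r, hr, fun J h1 h2 x hx hxr => h (by rwa [dist_eq_norm]) J h1 h2 hx⟩

end Newton

lemma norm_sub_le_two_mul_of_mem_projSet {A : Set (E n)} {y z w : E n} (hy : y ∈ projSet A z)
    (hw : w ∈ A) : ‖y - w‖ ≤ 2 * ‖z - w‖ :=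
  calc ‖y - w‖ ≤ ‖y - z‖ + ‖z - w‖ := norm_sub_le_norm_sub_add_norm_sub y z w
    _ ≤ 2 * ‖z - w‖ := by rw [norm_sub_rev]; linarith [hy.2 w hw]

lemma norm_sub_smul_sub_sub_smul_le {X : Type*} [SeminormedAddCommGroup X] [NormedSpace ℝ X]
    {g : X → X} {L lam : ℝ} (hlam : 0 ≤ lam) (hg : ∀ x y, ‖g x - g y‖ ≤ L * ‖x - y‖)
    (x y : X) : ‖x - lam • g x - (y - lam • g y)‖ ≤ (1 + lam * L) * ‖x - y‖ :=
  calc ‖x - lam • g x - (y - lam • g y)‖ = ‖(x - y) - lam • (g x - g y)‖ := by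
        rw [smul_sub]; abel_nf
    _ ≤ ‖x - y‖ + lam * ‖g x - g y‖ := (norm_sub_le _ _).trans_eq
        (by rw [norm_smul, Real.norm_of_nonneg hlam])
    _ ≤ ‖x - y‖ + lam * (L * ‖x - y‖) := by gcongr; exact hg x y
    _ = (1 + lam * L) * ‖x - y‖ := by ring

lemma eventually_norm_sub_le_of_mem_projSet_sub_smul {g : E n → E n} {w : E n} {L lam : ℝ}
    (hlam : 0 ≤ lam) (hg : ∀ x y, ‖g x - g y‖ ≤ L * ‖x - y‖) (hgw : ContinuousAt g w)
    (h : projSet (spSet n s) (w - lam • g w) = {w}) :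
    ∀ᶠ x in 𝓝 w, ∀ y ∈ projSet (spSet n s) (x - lam • g x), ‖y - w‖ ≤ (1 + lam * L) * ‖x - w‖ :=
  ((tendsto_id.sub (hgw.tendsto.const_smul lam)).eventually
    (eventually_norm_sub_le_of_projSet_eq_singleton h)).mono fun x hx y hy =>
      (hx y hy).trans (norm_sub_smul_sub_sub_smul_le hlam hg x w)

section QuadraticIteration

variable {X : Type*} [SeminormedAddCommGroup X] {T : X → X} {P : X → Prop} {a : X} {C r : ℝ}
  {x : ℕ → X} {t : ℕ}

lemma quadratic_iterate_invariant
    (hT : ∀ y, P y → ‖y - a‖ < r → P (T y) ∧ ‖T y - a‖ ≤ C * ‖y - a‖ ^ 2) (hC0 : 0 ≤ C)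
    (hx : ∀ j < t, x (j + 1) = T (x j)) (h0 : P (x 0)) (hr : ‖x 0 - a‖ < r)
    (hC : C * ‖x 0 - a‖ ≤ 1) : ∀ j ≤ t, P (x j) ∧ ‖x j - a‖ ≤ ‖x 0 - a‖ := by
  intro j
  induction j with
  | zero => exact fun _ => ⟨h0, le_rfl⟩
  | succ j ih =>
    intro hj
    obtain ⟨hPj, hj0⟩ := ih (by omega)
    obtain ⟨hPT, hTj⟩ := hT _ hPj (hj0.trans_lt hr)
    rw [hx j (by omega)]
    refine ⟨hPT, hTj.trans ?_⟩
    nlinarith [mul_le_mul_of_nonneg_left hj0 hC0, norm_nonneg (x j - a)]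

lemma norm_quadratic_iterate_sub_le
    (hT : ∀ y, P y → ‖y - a‖ < r → P (T y) ∧ ‖T y - a‖ ≤ C * ‖y - a‖ ^ 2) (hC0 : 0 ≤ C)
    (hx : ∀ j < t, x (j + 1) = T (x j)) (h0 : P (x 0)) (hr : ‖x 0 - a‖ < r)
    (hC : C * ‖x 0 - a‖ ≤ 1) (ht : 1 ≤ t) : ‖x t - a‖ ≤ C * ‖x 0 - a‖ ^ 2 := by
  obtain ⟨t, rfl⟩ := Nat.exists_eq_add_of_le' ht
  obtain ⟨hP, hle⟩ := quadratic_iterate_invariant hT hC0 hx h0 hr hC t (by omega)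
  rw [hx t (by omega)]
  exact (hT _ hP (hle.trans_lt hr)).2.trans (by gcongr)

end QuadraticIteration

theorem stmt19_general {n s : ℕ}
    (f' : EuclideanSpace ℝ (Fin n) → EuclideanSpace ℝ (Fin n))
    (Hess : EuclideanSpace ℝ (Fin n) → Matrix (Fin n) (Fin n) ℝ)
    (L lam : ℝ) (hL : 0 < L)
    (hlip : ∀ x y, ‖f' x - f' y‖ ≤ L * ‖x - y‖)
    (hlam0 : 0 < lam)
    (wstar : EuclideanSpace ℝ (Fin n)) (hws : wstar ∈ spSet n s)
    (hsingleton : projSet (spSet n s) (wstar - lam • f' wstar) = {wstar})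
    (U : Set (EuclideanSpace ℝ (Fin n))) (hU : IsOpen U) (hwU : wstar ∈ U)
    (hHess : ∀ x ∈ U, HasFDerivAt f'
      (LinearMap.toContinuousLinearMap (Matrix.toEuclideanLin (Hess x))) x)
    (hHessLip : ∀ J : Finset (Fin n), J.card = s → wstar ∈ coordSub J →
      ∃ K : ℝ, ∀ u ∈ U ∩ coordSub J, ∀ v ∈ U ∩ coordSub J,
        ∀ i ∈ J, ∀ j ∈ J, |Hess u i j - Hess v i j| ≤ K * ‖u - v‖)
    (hPD : ∀ J : Finset (Fin n), J.card = s → wstar ∈ coordSub J →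
      (hessSub (Hess wstar) J).PosDef)
    (t : ℕ) (ht : 1 ≤ t) (N : ℕ)
    (w : ℕ → EuclideanSpace ℝ (Fin n))
    (winner : ℕ → ℕ → EuclideanSpace ℝ (Fin n))
    (Jsel : ℕ → Finset (Fin n))
    (hiter : ∀ k ≥ N,
      projSet (spSet n s) (w k) ⊆ U ∧
      winner k 0 ∈ projSet (spSet n s) (w k) ∧
      (Jsel k).card = s ∧ winner k 0 ∈ coordSub (Jsel k) ∧
      (∀ j < t, winner k (j + 1) = newtonStep f' Hess (Jsel k) (winner k j)) ∧
      w (k + 1) ∈ projSet (spSet n s) (winner k t - lam • f' (winner k t)))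
    (hconvg : Tendsto w atTop (𝓝 wstar)) :
    ∃ c > 0, ∃ N' : ℕ, ∀ k ≥ N', ‖w (k + 1) - wstar‖ ≤ c * ‖w k - wstar‖ ^ 2 := by
  have hwP : wstar ∈ projSet (spSet n s) (wstar - lam • f' wstar) := by simp [hsingleton]
  obtain ⟨C, hC, r, hr, hnewton⟩ := exists_norm_newtonStep_sub_le_uniform hU hwU hHess hHessLip
    hPD fun J hJ hwJ _ hi => apply_eq_zero_of_mem_projSet_sub_smul hlam0.ne' hwP hJ hwJ hi
  have hlim := tendsto_norm_sub_self wstar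
  obtain ⟨ρ, hρ, hgood⟩ := Metric.eventually_nhds_iff.1 <|
    ((hlim.eventually (gt_mem_nhds hr)).and
      ((hlim.const_mul C).eventually (gt_mem_nhds (show C * 0 < 1 by simp)))).and
    ((eventually_coordSupport_subset wstar).and
      (eventually_norm_sub_le_of_mem_projSet_sub_smul hlam0.le hlip
        (hHess wstar hwU).continuousAt hsingleton))
  obtain ⟨N', hN'⟩ := eventually_atTop.1 <|
    (hconvg.eventually (Metric.ball_mem_nhds wstar (half_pos hρ))).and (eventually_ge_atTop N)
  refine ⟨4 * (1 + lam * L) * C, by positivity, N', fun k hk => ?_⟩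
  obtain ⟨hkρ, hkN⟩ := hN' k hk
  obtain ⟨-, hx0, hJ, hx0J, hx, hw⟩ := hiter k hkN
  have h0 := norm_sub_le_two_mul_of_mem_projSet hx0 hws
  have h0ρ : ‖winner k 0 - wstar‖ < ρ := by rw [dist_eq_norm] at hkρ; linarith
  obtain ⟨⟨h0r, h0C⟩, hsupp, -⟩ := hgood (by rwa [dist_eq_norm])
  have hwJ := mem_coordSub_of_coordSupport_subset hsupp hx0J
  have hxt := norm_quadratic_iterate_sub_le (P := (· ∈ coordSub (Jsel k)))
    (fun y hy hyr => ⟨newtonStep_mem_coordSub, hnewton _ hJ hwJ y hy hyr⟩)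
    hC.le hx hx0J h0r h0C.le ht
  obtain ⟨-, -, hproj⟩ := hgood (y := winner k t) (by
    rw [dist_eq_norm]; nlinarith [norm_nonneg (winner k 0 - wstar)])
  calc ‖w (k + 1) - wstar‖ ≤ (1 + lam * L) * ‖winner k t - wstar‖ := hproj _ hw
    _ ≤ (1 + lam * L) * (C * (2 * ‖w k - wstar‖) ^ 2) := by gcongr; exact hxt.trans (by gcongr)
    _ = 4 * (1 + lam * L) * C * ‖w k - wstar‖ ^ 2 := by ring

/-- Q-quadratic convergence of the two-stage scheme alternating $t$
Newton steps on the identified subspace with one projected gradient step. -/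
theorem stmt19 {n s : ℕ} (hs1 : 1 ≤ s) (hsn : s ≤ n)
    (f : EuclideanSpace ℝ (Fin n) → ℝ)
    (f' : EuclideanSpace ℝ (Fin n) → EuclideanSpace ℝ (Fin n))
    (Hess : EuclideanSpace ℝ (Fin n) → Matrix (Fin n) (Fin n) ℝ)
    (L lam : ℝ) (hL : 0 < L)
    (hconv : ConvexOn ℝ Set.univ f)
    (hgrad : ∀ x, HasGradientAt f (f' x) x)
    (hlip : ∀ x y, ‖f' x - f' y‖ ≤ L * ‖x - y‖)
    (hbdd : BddBelow (f '' spSet n s))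
    (hlam0 : 0 < lam) (hlamL : lam < 1 / L)
    (wstar : EuclideanSpace ℝ (Fin n)) (hws : wstar ∈ spSet n s)
    (hsingleton : projSet (spSet n s) (wstar - lam • f' wstar) = {wstar})
    (U : Set (EuclideanSpace ℝ (Fin n))) (hU : IsOpen U) (hwU : wstar ∈ U)
    (hC2 : ContDiffOn ℝ 2 f U)
    (hHess : ∀ x ∈ U, HasFDerivAt f'
      (LinearMap.toContinuousLinearMap (Matrix.toEuclideanLin (Hess x))) x)
    (hHessLip : ∀ J : Finset (Fin n), J.card = s → wstar ∈ coordSub J →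
      ∃ K : ℝ, ∀ u ∈ U ∩ coordSub J, ∀ v ∈ U ∩ coordSub J,
        ∀ i ∈ J, ∀ j ∈ J, |Hess u i j - Hess v i j| ≤ K * ‖u - v‖)
    (hPD : ∀ J : Finset (Fin n), J.card = s → wstar ∈ coordSub J →
      (hessSub (Hess wstar) J).PosDef)
    (t : ℕ) (ht : 1 ≤ t) (N : ℕ)
    (w : ℕ → EuclideanSpace ℝ (Fin n))
    (winner : ℕ → ℕ → EuclideanSpace ℝ (Fin n))
    (Jsel : ℕ → Finset (Fin n))
    (hiter : ∀ k ≥ N,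
      projSet (spSet n s) (w k) ⊆ U ∧
      winner k 0 ∈ projSet (spSet n s) (w k) ∧
      (Jsel k).card = s ∧ winner k 0 ∈ coordSub (Jsel k) ∧
      (∀ j < t, winner k (j + 1) = newtonStep f' Hess (Jsel k) (winner k j)) ∧
      w (k + 1) ∈ projSet (spSet n s) (winner k t - lam • f' (winner k t)))
    (hconvg : Tendsto w atTop (𝓝 wstar)) :
    ∃ c > 0, ∃ N' : ℕ, ∀ k ≥ N', ‖w (k + 1) - wstar‖ ≤ c * ‖w k - wstar‖ ^ 2 :=
  stmt19_general f' Hess L lam hL hlip hlam0 wstar hws hsingleton U hU hwU hHess hHessLip hPD t ht N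
    w winner Jsel hiter hconvg
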